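/- arXiv:1203.5729 — 3 statements merged into one kernel-verified Lean document; each statement's English description precedes it below -/
import Mathlib

section
/- For the upper incomplete gamma function, for every a ∈ ℝ, Γ(a, z) / (z^{a-1} e^{-z}) → 1 as z → ∞. -/
open Set Real Filter MeasureTheory Topology

/-- Leading-order asymptotics of the upper incomplete gamma function:
`Γ(a, z) / (z^{a-1} e^{-z}) → 1` as `z → ∞`, for every `a : ℝ`. -/
theorem incomplete_gamma_asymptotic (a : ℝ) :
    Filter.Tendsto
      (fun z : ℝ =>
        (∫ t in Set.Ioi z, t ^ (a - 1) * Real.exp (-t)) /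
          (z ^ (a - 1) * Real.exp (-z)))
      Filter.atTop (nhds 1) := by
  set φ : ℝ → ℝ := fun t => t ^ (a - 1) * Real.exp (-t) with hφ
  -- continuity of φ on positive reals
  have hφc : ∀ z : ℝ, 0 < z → ContinuousAt φ z := fun z hz =>
    ((Real.continuousAt_rpow_const z (a - 1) (Or.inl hz.ne')).mul
      ((Real.continuous_exp.comp continuous_neg).continuousAt))
  have hφpos : ∀ z : ℝ, 0 < z → 0 < φ z := fun z hz =>
    mul_pos (Real.rpow_pos_of_pos hz _) (Real.exp_pos _)
  -- integrability on Ioi 1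
  have hint : IntegrableOn φ (Ioi 1) := by
    apply integrable_of_isBigO_exp_neg (b := 1/2) (by norm_num)
    · intro x hx
      exact (hφc x (lt_of_lt_of_le one_pos hx)).continuousWithinAt
    · have := (Real.Gamma_integrand_isLittleO (a - 1)).isBigO
      simpa [hφ, mul_comm] using this
  have hinterval : ∀ z : ℝ, 1 ≤ z → IntervalIntegrable φ volume 1 z := by
    intro z hz
    rw [intervalIntegrable_iff_integrableOn_Ioc_of_le hz]
    exact hint.mono_set Ioc_subset_Ioi_self
  set I : ℝ := ∫ t in Ioi 1, φ t with hI
  -- the numerator equals I - ∫ 1..z for z ≥ 1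
  have hsplit : ∀ z : ℝ, 1 ≤ z → (∫ t in Ioi z, φ t) = I - ∫ t in (1:ℝ)..z, φ t := by
    intro z hz
    have h1 : (∫ t in (1:ℝ)..z, φ t) = ∫ t in Ioc 1 z, φ t :=
      intervalIntegral.integral_of_le hz
    have h2 : I = (∫ t in Ioc 1 z, φ t) + ∫ t in Ioi z, φ t := by
      rw [hI, ← MeasureTheory.setIntegral_union (Ioc_disjoint_Ioi le_rfl)
        measurableSet_Ioi (hint.mono_set Ioc_subset_Ioi_self)
        (hint.mono_set (Ioi_subset_Ioi hz)), Ioc_union_Ioi_eq_Ioi hz]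
    rw [h1, h2]; ring
  -- derivative of the numerator
  have hff' : ∀ᶠ z in atTop, HasDerivAt (fun z => ∫ t in Ioi z, φ t) (-φ z) z := by
    filter_upwards [eventually_gt_atTop 1] with z hz
    have hzpos : (0:ℝ) < z := lt_trans one_pos hz
    have hF : HasDerivAt (fun u => ∫ t in (1:ℝ)..u, φ t) (φ z) z := by
      refine intervalIntegral.integral_hasDerivAt_right (hinterval z hz.le) ?_ (hφc z hzpos)
      exact ContinuousAt.stronglyMeasurableAtFilter isOpen_Ioi
        (fun x hx => hφc x hx) z hzpos
    have hG : HasDerivAt (fun u => I - ∫ t in (1:ℝ)..u, φ t) (-φ z) z :=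
      (hF.const_sub I)
    refine hG.congr_of_eventuallyEq ?_
    filter_upwards [eventually_nhds_iff.2 ⟨Ioi 1, fun x hx => hx, isOpen_Ioi, hz⟩]
      with x hx
    exact (hsplit x hx.le).symm ▸ rfl
  -- derivative of the denominator
  set g' : ℝ → ℝ := fun z => φ z * ((a - 1) / z - 1) with hg'def
  have hgg' : ∀ᶠ z in atTop, HasDerivAt (fun z : ℝ => z ^ (a - 1) * Real.exp (-z)) (g' z) z := by
    filter_upwards [eventually_gt_atTop 0] with z hz
    have h1 : HasDerivAt (fun x : ℝ => x ^ (a - 1)) ((a - 1) * z ^ (a - 1 - 1)) z :=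
      Real.hasDerivAt_rpow_const (Or.inl hz.ne')
    have h2 : HasDerivAt (fun x : ℝ => Real.exp (-x)) (-Real.exp (-z)) z := by
      simpa using ((hasDerivAt_id z).neg.exp)
    have := h1.mul h2
    convert this using 1
    · rfl
    · rfl
    · rfl
    have hzz : z ^ (a - 1 - 1) = z ^ (a - 1) / z := by
      rw [Real.rpow_sub hz, Real.rpow_one]
    rw [hg'def]
    simp only [hφ]
    rw [hzz]
    field_simp
    ring
  -- g' nonzero eventually
  have hg'ne : ∀ᶠ z in atTop, g' z ≠ 0 := by
    filter_upwards [eventually_gt_atTop 0, eventually_gt_atTop (|a - 1|)] with z hz hza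
    have h1 : (a - 1) / z < 1 := by
      rw [div_lt_one hz]
      exact lt_of_le_of_lt (le_abs_self _) hza
    exact mul_ne_zero (hφpos z hz).ne' (by linarith)
  -- numerator → 0
  have hftop : Tendsto (fun z => ∫ t in Ioi z, φ t) atTop (𝓝 0) := by
    have h1 : Tendsto (fun z => ∫ t in (1:ℝ)..z, φ t) atTop (𝓝 I) :=
      MeasureTheory.intervalIntegral_tendsto_integral_Ioi 1 hint tendsto_id
    have h2 : Tendsto (fun z => I - ∫ t in (1:ℝ)..z, φ t) atTop (𝓝 0) := by
      simpa using ((tendsto_const_nhds (x := I)).sub h1)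
    refine h2.congr' ?_
    filter_upwards [eventually_ge_atTop 1] with z hz
    exact (hsplit z hz).symm
  -- denominator → 0
  have hgtop : Tendsto (fun z : ℝ => z ^ (a - 1) * Real.exp (-z)) atTop (𝓝 0) := by
    have := tendsto_rpow_mul_exp_neg_mul_atTop_nhds_zero (a - 1) 1 one_pos
    simpa using this
  -- ratio of derivatives → 1
  have hdiv : Tendsto (fun z => (-φ z) / g' z) atTop (𝓝 1) := by
    have hd : Tendsto (fun z : ℝ => (a - 1) / z - 1) atTop (𝓝 (-1)) := by
      simpa using ((tendsto_const_nhds.div_atTop tendsto_id).sub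
        (tendsto_const_nhds (α := ℝ) (x := (1:ℝ))))
    have h1 : Tendsto (fun z : ℝ => (-1) / ((a - 1) / z - 1)) atTop (𝓝 1) := by
      have := (tendsto_const_nhds (x := (-1:ℝ))).div hd (by norm_num)
      rw [show (-1:ℝ) / -1 = 1 by norm_num] at this
      exact this
    refine h1.congr' ?_
    filter_upwards [eventually_gt_atTop 0, hg'ne] with z hz hne
    have hφne := (hφpos z hz).ne'
    have hcne : ((a - 1) / z - 1) ≠ 0 := by
      intro h
      exact hne (by show φ z * ((a - 1) / z - 1) = 0; rw [h, mul_zero])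
    have key : ∀ x c : ℝ, x ≠ 0 → -x / (x * c) = -1 / c := by
      intro x c hx
      rw [← div_div, neg_div x x, div_self hx]
    exact ((key (φ z) ((a - 1) / z - 1) hφne).symm : _)
  exact HasDerivAt.lhopital_zero_atTop hff' hgg' hg'ne hftop hgtop hdiv
end

section
/- Term-wise integration of the GIG tail: for λ ∈ ℝ, ω > 0, and x > 0, ∫_x^∞ t^{λ-1} e^{-(ω/2)(1/t + t)} dt = ∑_{k=0}^∞ ((-1)^k / k!) (2/ω)^{λ-2k} Γ(λ - k, ωx/2), where the series converges absolutely. -/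
open Set Real MeasureTheory Filter Asymptotics

lemma aux_tsum_exp (y : ℝ) : ∑' n : ℕ, y ^ n / n.factorial = Real.exp y := by
  rw [Real.exp_eq_exp_ℝ, NormedSpace.exp_eq_tsum_div]

lemma aux_integrable (a b z : ℝ) (hb : 0 < b) (hz : 0 < z) :
    IntegrableOn (fun t => t ^ (a - 1) * Real.exp (-b * t)) (Ioi z) := by
  apply integrable_of_isBigO_exp_neg (b := b / 2) (by positivity)
  · apply ContinuousOn.mul
    · intro t ht
      exact (Real.continuousAt_rpow_const t _ (Or.inl (lt_of_lt_of_le hz ht).ne')).continuousWithinAt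
    · exact (Real.continuous_exp.comp (continuous_const.mul continuous_id)).continuousOn
  · have h := (isLittleO_rpow_exp_pos_mul_atTop (a - 1) (show (0:ℝ) < b / 2 by positivity)).isBigO
    have h2 : (fun t : ℝ => Real.exp (b / 2 * t) * Real.exp (-b * t)) =
        fun t => Real.exp (-(b / 2) * t) := by
      funext t; rw [← Real.exp_add]; ring_nf
    calc (fun t : ℝ => t ^ (a - 1) * Real.exp (-b * t))
        =O[atTop] fun t => Real.exp (b / 2 * t) * Real.exp (-b * t) :=
          h.mul (isBigO_refl _ _)
      _ = fun t => Real.exp (-(b / 2) * t) := h2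

/-- The upper incomplete gamma function `Γ(a, z) = ∫_z^∞ s^{a-1} e^{-s} ds`. -/
noncomputable def upperIncompleteGamma (a z : ℝ) : ℝ :=
  ∫ s in Set.Ioi z, s ^ (a - 1) * Real.exp (-s)

lemma aux_cov (a b x : ℝ) (hb : 0 < b) (hx : 0 < x) :
    ∫ t in Ioi x, t ^ (a - 1) * Real.exp (-b * t) =
      b ^ (-a) * upperIncompleteGamma a (b * x) := by
  have key := integral_comp_mul_left_Ioi (fun s => s ^ (a - 1) * Real.exp (-s)) x hb
  have h1 : ∫ t in Ioi x, (b * t) ^ (a - 1) * Real.exp (-(b * t)) =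
      b ^ (a - 1) * ∫ t in Ioi x, t ^ (a - 1) * Real.exp (-b * t) := by
    rw [← integral_const_mul]
    apply setIntegral_congr_fun measurableSet_Ioi
    intro t ht
    have ht0 : (0:ℝ) ≤ t := (hx.trans ht).le
    simp only []
    rw [Real.mul_rpow hb.le ht0]
    ring_nf
  rw [h1] at key
  have hba : (0:ℝ) < b ^ (a - 1) := Real.rpow_pos_of_pos hb _
  have : ∫ t in Ioi x, t ^ (a - 1) * Real.exp (-b * t) =
      (b ^ (a - 1))⁻¹ * (b⁻¹ * upperIncompleteGamma a (b * x)) := by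
    simp only [smul_eq_mul] at key
    rw [upperIncompleteGamma, ← key]
    field_simp
  rw [this, ← Real.rpow_neg_one b, ← Real.rpow_neg hb.le, ← mul_assoc,
    ← Real.rpow_add hb]
  congr 1
  ring_nf

/-- Term-wise integration of the GIG tail: for `λ ∈ ℝ`, `ω > 0` and `x > 0`,
`∫_x^∞ t^{λ-1} e^{-(ω/2)(1/t + t)} dt = ∑_{k=0}^∞ ((-1)^k/k!) (2/ω)^{λ-2k} Γ(λ-k, ωx/2)`,
the series converging absolutely. -/
theorem gig_tail_termwise_integration
    (lam ω : ℝ) (hω : 0 < ω) :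
    ∀ x > (0 : ℝ),
      HasSum
        (fun k : ℕ =>
          (-1 : ℝ) ^ k / (k.factorial : ℝ) * (2 / ω) ^ (lam - 2 * (k : ℝ)) *
            upperIncompleteGamma (lam - k) (ω * x / 2))
        (∫ t in Set.Ioi x, t ^ (lam - 1) * Real.exp (-(ω / 2) * (1 / t + t))) ∧
      Summable
        (fun k : ℕ =>
          |(-1 : ℝ) ^ k / (k.factorial : ℝ) * (2 / ω) ^ (lam - 2 * (k : ℝ)) *
            upperIncompleteGamma (lam - k) (ω * x / 2)|) := by
  intro x hx
  have hc0 : (0:ℝ) < ω / 2 := by positivity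
  set F : ℕ → ℝ → ℝ := fun k t =>
    (-(ω / (2 * t))) ^ k / (k.factorial : ℝ) * (t ^ (lam - 1) * Real.exp (-(ω / 2) * t))
    with hF
  -- pointwise identity on Ioi x
  have hpt : ∀ k : ℕ, ∀ t ∈ Ioi x, F k t =
      ((-1 : ℝ) ^ k * (ω / 2) ^ k / (k.factorial : ℝ)) *
        (t ^ (lam - (k : ℝ) - 1) * Real.exp (-(ω / 2) * t)) := by
    intro k t ht
    have ht0 : 0 < t := hx.trans ht
    have h1 : -(ω / (2 * t)) = (-1) * ((ω / 2) * t⁻¹) := by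
      field_simp
    have h2 : (t⁻¹ : ℝ) ^ k = t ^ (-(k : ℝ)) := by
      rw [Real.rpow_neg ht0.le, Real.rpow_natCast]
      exact inv_pow t k
    rw [hF]
    simp only []
    rw [h1, mul_pow, mul_pow, h2,
      show (-1 : ℝ) ^ k * ((ω / 2) ^ k * t ^ (-(k : ℝ))) / (k.factorial : ℝ) *
          (t ^ (lam - 1) * Real.exp (-(ω / 2) * t)) =
        ((-1 : ℝ) ^ k * (ω / 2) ^ k / (k.factorial : ℝ)) *
          ((t ^ (-(k : ℝ)) * t ^ (lam - 1)) * Real.exp (-(ω / 2) * t)) from by ring,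
      ← Real.rpow_add ht0, show -(k : ℝ) + (lam - 1) = lam - (k : ℝ) - 1 from by ring]
  -- integrability of each term
  have hint : ∀ k : ℕ, IntegrableOn (F k) (Ioi x) := by
    intro k
    have h := (aux_integrable (lam - (k : ℝ)) (ω / 2) x hc0 hx).const_mul
      ((-1 : ℝ) ^ k * (ω / 2) ^ k / (k.factorial : ℝ))
    exact IntegrableOn.congr_fun h (fun t ht => (hpt k t ht).symm) measurableSet_Ioi
  -- bound on the norm integrals
  have hb : ∀ k : ℕ, (∫ t in Ioi x, ‖F k t‖) ≤
      (ω / (2 * x)) ^ k / (k.factorial : ℝ) *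
        ∫ t in Ioi x, t ^ (lam - 1) * Real.exp (-(ω / 2) * t) := by
    intro k
    rw [← integral_const_mul]
    apply setIntegral_mono_on ((hint k).norm)
      ((aux_integrable lam (ω / 2) x hc0 hx).const_mul _) measurableSet_Ioi
    intro t ht
    have ht0 : 0 < t := hx.trans ht
    have hM : (0:ℝ) ≤ t ^ (lam - 1) * Real.exp (-(ω / 2) * t) := by positivity
    have h1 : ‖F k t‖ = (ω / (2 * t)) ^ k / (k.factorial : ℝ) *
        (t ^ (lam - 1) * Real.exp (-(ω / 2) * t)) := by
      rw [hF]
      simp only []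
      rw [Real.norm_eq_abs, abs_mul, abs_div, abs_pow, abs_neg,
        abs_of_nonneg (by positivity : (0:ℝ) ≤ ω / (2 * t)),
        abs_of_nonneg hM, Nat.abs_cast]
    rw [h1]
    gcongr
    exact ht.le
  -- summability of norm integrals
  have hsum : Summable (fun k => ∫ t in Ioi x, ‖F k t‖) := by
    refine Summable.of_nonneg_of_le (fun k => integral_nonneg fun t => norm_nonneg _) hb ?_
    exact (Real.summable_pow_div_factorial (ω / (2 * x))).mul_right _
  have hH := MeasureTheory.hasSum_integral_of_summable_integral_norm
    (μ := volume.restrict (Ioi x)) hint hsum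
  -- identify the sum of the series inside the integral
  have h2 : (∫ t in Ioi x, (∑' k, F k t)) =
      ∫ t in Ioi x, t ^ (lam - 1) * Real.exp (-(ω / 2) * (1 / t + t)) := by
    apply setIntegral_congr_fun measurableSet_Ioi
    intro t ht
    have ht0 : 0 < t := hx.trans ht
    have key : Real.exp (-(ω / (2 * t))) * (t ^ (lam - 1) * Real.exp (-(ω / 2) * t)) =
        t ^ (lam - 1) * Real.exp (-(ω / 2) * (1 / t + t)) := by
      rw [show -(ω / 2) * (1 / t + t) = -(ω / (2 * t)) + -(ω / 2) * t from by
        field_simp; ring, Real.exp_add]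
      ring
    simp only [hF]
    rw [tsum_mul_right, aux_tsum_exp, key]
  rw [h2] at hH
  -- identify each term
  have hterm : ∀ k : ℕ, (∫ t in Ioi x, F k t) =
      (-1 : ℝ) ^ k / (k.factorial : ℝ) * (2 / ω) ^ (lam - 2 * (k : ℝ)) *
        upperIncompleteGamma (lam - k) (ω * x / 2) := by
    intro k
    have h1 : (∫ t in Ioi x, F k t) =
        ((-1 : ℝ) ^ k * (ω / 2) ^ k / (k.factorial : ℝ)) *
          ∫ t in Ioi x, t ^ (lam - (k : ℝ) - 1) * Real.exp (-(ω / 2) * t) := by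
      rw [← integral_const_mul]
      exact setIntegral_congr_fun measurableSet_Ioi (hpt k)
    have hco : ((-1 : ℝ) ^ k * (ω / 2) ^ k / (k.factorial : ℝ)) *
        (ω / 2) ^ (-(lam - (k : ℝ))) =
        (-1 : ℝ) ^ k / (k.factorial : ℝ) * (2 / ω) ^ (lam - 2 * (k : ℝ)) := by
      have : ((ω / 2 : ℝ)) ^ ((k : ℝ)) * (ω / 2) ^ (-(lam - (k : ℝ))) =
          (2 / ω) ^ (lam - 2 * (k : ℝ)) := by
        rw [← Real.rpow_add hc0,
          show (k : ℝ) + -(lam - (k : ℝ)) = -(lam - 2 * (k : ℝ)) from by ring,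
          Real.rpow_neg hc0.le, ← Real.inv_rpow hc0.le, inv_div]
      calc ((-1 : ℝ) ^ k * (ω / 2) ^ k / (k.factorial : ℝ)) * (ω / 2) ^ (-(lam - (k : ℝ)))
          = (-1 : ℝ) ^ k / (k.factorial : ℝ) *
            (((ω / 2 : ℝ)) ^ ((k : ℝ)) * (ω / 2) ^ (-(lam - (k : ℝ)))) := by
            rw [Real.rpow_natCast]; ring
        _ = (-1 : ℝ) ^ k / (k.factorial : ℝ) * (2 / ω) ^ (lam - 2 * (k : ℝ)) := by rw [this]
    rw [h1, aux_cov (lam - (k : ℝ)) (ω / 2) x hc0 hx,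
      show (ω / 2) * x = ω * x / 2 from by ring, ← mul_assoc, hco, mul_assoc]
  constructor
  · have hfun : (fun k : ℕ => ∫ t in Ioi x, F k t) =
        (fun k : ℕ => (-1 : ℝ) ^ k / (k.factorial : ℝ) * (2 / ω) ^ (lam - 2 * (k : ℝ)) *
          upperIncompleteGamma (lam - k) (ω * x / 2)) := funext hterm
    rw [hfun] at hH
    exact hH
  · refine Summable.of_nonneg_of_le (fun k => abs_nonneg _) (fun k => ?_) hsum
    rw [← hterm k]
    exact (Real.norm_eq_abs _) ▸ norm_integral_le_integral_norm _
end

section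
/- If Q : (0,1) → ℝ is the quantile function of the standard normal distribution, Q(u) = √2 · erfinv(2u - 1), then the transformed function A(z) := Q(1 - e^{-z}) satisfies, for the condition numbers κ_Q(u) = |u Q'(u)/Q(u)| and κ_A(z) = |z A'(z)/A(z)|: κ_Q(u) → ∞ as u → 1⁻, while A(z)/√(2z) → 1 as z → ∞ (so Q has an unbounded condition number at 1 while A grows only like √(2z)). -/
open Set Real Filter MeasureTheory

noncomputable def gpdf (t : ℝ) : ℝ := (1 / Real.sqrt (2 * Real.pi)) * Real.exp (-t ^ 2 / 2)
noncomputable def gcdf (x : ℝ) : ℝ := ∫ t in Set.Iic x, gpdf t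


lemma gpdf_pos (t : ℝ) : 0 < gpdf t := by
  unfold gpdf
  positivity

lemma gpdf_eq (t : ℝ) : gpdf t = (1 / Real.sqrt (2 * Real.pi)) * Real.exp (-(1/2) * t ^ 2) := by
  unfold gpdf; ring_nf

lemma gpdf_integrable : Integrable gpdf := by
  have := (integrable_exp_neg_mul_sq (by norm_num : (0:ℝ) < 1/2)).const_mul
    (1 / Real.sqrt (2 * Real.pi))
  refine this.congr (Eventually.of_forall fun t => ?_)
  rw [gpdf_eq]

lemma gpdf_total : ∫ t, gpdf t = 1 := by
  have h : ∫ t, gpdf t = (1 / Real.sqrt (2 * Real.pi)) * ∫ t, Real.exp (-(1/2) * t ^ 2) := by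
    rw [← integral_const_mul]
    exact integral_congr_ae (Eventually.of_forall fun t => gpdf_eq t)
  rw [h, integral_gaussian]
  have h2 : Real.pi / (1/2) = 2 * Real.pi := by ring
  rw [h2, one_div, inv_mul_cancel₀]
  positivity

lemma gpdf_continuous : Continuous gpdf := by
  unfold gpdf; fun_prop

lemma gcdf_hasDeriv (x : ℝ) : HasDerivAt gcdf (gpdf x) x := by
  have hfun : gcdf = fun y => gcdf 0 + ∫ t in (0:ℝ)..y, gpdf t := by
    funext y
    rw [← intervalIntegral.integral_Iic_sub_Iic gpdf_integrable.integrableOn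
      gpdf_integrable.integrableOn]
    unfold gcdf; ring
  rw [hfun]
  have : HasDerivAt (fun y => ∫ t in (0:ℝ)..y, gpdf t) (gpdf x) x :=
    intervalIntegral.integral_hasDerivAt_right gpdf_integrable.intervalIntegrable
      gpdf_continuous.aestronglyMeasurable.stronglyMeasurableAtFilter
      gpdf_continuous.continuousAt
  exact this.const_add _

lemma gcdf_strictMono : StrictMono gcdf :=
  strictMono_of_deriv_pos (fun x => by rw [(gcdf_hasDeriv x).deriv]; exact gpdf_pos x)

lemma gcdf_le_one (x : ℝ) : gcdf x ≤ 1 := by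
  rw [← gpdf_total]
  exact setIntegral_le_integral gpdf_integrable
    (Eventually.of_forall fun t => (gpdf_pos t).le)

lemma gcdf_lt_one (x : ℝ) : gcdf x < 1 :=
  lt_of_lt_of_le (gcdf_strictMono (lt_add_one x)) (gcdf_le_one _)

lemma gcdf_pos (x : ℝ) : 0 < gcdf x := by
  have h0 : 0 ≤ gcdf (x - 1) :=
    setIntegral_nonneg measurableSet_Iic fun t _ => (gpdf_pos t).le
  exact lt_of_le_of_lt h0 (gcdf_strictMono (by linarith))

lemma one_sub_gcdf (x : ℝ) : 1 - gcdf x = ∫ t in Set.Ioi x, gpdf t := by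
  have := intervalIntegral.integral_Iic_add_Ioi (μ := volume) (b := x)
    gpdf_integrable.integrableOn gpdf_integrable.integrableOn
  rw [gpdf_total] at this
  unfold gcdf; linarith

lemma integrable_mul_gpdf : Integrable fun t => t * gpdf t := by
  have h := (integrable_rpow_mul_exp_neg_mul_sq (by norm_num : (0:ℝ) < 1/2)
    (by norm_num : (-1:ℝ) < 1)).const_mul (1 / Real.sqrt (2 * Real.pi))
  refine h.congr (Eventually.of_forall fun t => ?_)
  show (1 / Real.sqrt (2 * Real.pi)) * (t ^ (1:ℝ) * Real.exp (-(1/2) * t ^ 2)) = t * gpdf t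
  rw [Real.rpow_one]; unfold gpdf; ring_nf

lemma hasDerivAt_neg_gpdf (t : ℝ) : HasDerivAt (fun s => -gpdf s) (t * gpdf t) t := by
  have h1 : HasDerivAt (fun s : ℝ => -s ^ 2 / 2) (-t) t := by
    have h := ((hasDerivAt_pow 2 t).neg).div_const 2
    refine h.congr_deriv ?_
    simp; ring
  have h2 := ((h1.exp).const_mul (1 / Real.sqrt (2 * Real.pi))).neg
  refine h2.congr_deriv ?_
  unfold gpdf; ring

lemma tendsto_gpdf_atTop : Tendsto gpdf atTop (nhds 0) := by
  have h0 : Tendsto (fun t : ℝ => t ^ 2 / 2) atTop atTop :=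
    (tendsto_pow_atTop (two_ne_zero)).atTop_div_const (by norm_num)
  have h1 : Tendsto (fun t : ℝ => -t ^ 2 / 2) atTop atBot := by
    have := tendsto_neg_atTop_atBot.comp h0
    refine this.congr fun t => ?_
    simp [Function.comp, neg_div]
  have h2 := Real.tendsto_exp_atBot.comp h1
  have h4 := h2.const_mul (1 / Real.sqrt (2 * Real.pi))
  rw [mul_zero] at h4
  exact h4

lemma integral_mul_gpdf (x : ℝ) : ∫ t in Set.Ioi x, t * gpdf t = gpdf x := by
  have hm : Tendsto (fun s => -gpdf s) atTop (nhds 0) := by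
    simpa using tendsto_gpdf_atTop.neg
  have h := integral_Ioi_of_hasDerivAt_of_tendsto' (f := fun s => -gpdf s)
    (f' := fun t => t * gpdf t) (a := x) (m := 0)
    (fun t _ => hasDerivAt_neg_gpdf t) integrable_mul_gpdf.integrableOn hm
  rw [h]; ring

lemma tail_upper {x : ℝ} (hx : 0 < x) : 1 - gcdf x ≤ gpdf x / x := by
  rw [one_sub_gcdf]
  have h1 : ∫ t in Set.Ioi x, gpdf t ≤ ∫ t in Set.Ioi x, t * gpdf t / x := by
    refine setIntegral_mono_on gpdf_integrable.integrableOn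
      (integrable_mul_gpdf.div_const x).integrableOn measurableSet_Ioi fun t ht => ?_
    rw [le_div_iff₀ hx]
    have ht' : x ≤ t := le_of_lt ht
    nlinarith [gpdf_pos t]
  calc ∫ t in Set.Ioi x, gpdf t ≤ ∫ t in Set.Ioi x, t * gpdf t / x := h1
    _ = (∫ t in Set.Ioi x, t * gpdf t) / x := by rw [integral_div]
    _ = gpdf x / x := by rw [integral_mul_gpdf]

lemma hasDerivAt_gpdf (t : ℝ) : HasDerivAt gpdf (-(t * gpdf t)) t := by
  have := (hasDerivAt_neg_gpdf t).neg
  refine this.congr_of_eventuallyEq (Eventually.of_forall fun s => ?_)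
  simp

noncomputable def lfun (t : ℝ) : ℝ := -(t / (1 + t ^ 2) * gpdf t)
noncomputable def lder (t : ℝ) : ℝ := gpdf t * (1 - 2 / (1 + t ^ 2) ^ 2)

lemma one_add_sq_pos (t : ℝ) : (0:ℝ) < 1 + t ^ 2 := by positivity

lemma hasDerivAt_lfun (t : ℝ) : HasDerivAt lfun (lder t) t := by
  have hne : (1 + t ^ 2) ≠ 0 := (one_add_sq_pos t).ne'
  have hd : HasDerivAt (fun s : ℝ => 1 + s ^ 2) (2 * t) t := by
    simpa using ((hasDerivAt_pow 2 t).const_add 1)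
  have hq : HasDerivAt (fun s : ℝ => s / (1 + s ^ 2))
      ((1 * (1 + t ^ 2) - t * (2 * t)) / (1 + t ^ 2) ^ 2) t :=
    (hasDerivAt_id t).div hd hne
  have h := (hq.mul (hasDerivAt_gpdf t)).neg
  refine h.congr_deriv ?_
  unfold lder
  field_simp
  ring

lemma lder_cont : Continuous lder := by
  unfold lder
  refine gpdf_continuous.mul (continuous_const.sub (continuous_const.div ?_ fun t => ?_))
  · continuity
  · positivity

lemma lder_integrable : Integrable lder := by
  refine Integrable.mono' gpdf_integrable lder_cont.aestronglyMeasurable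
    (Eventually.of_forall fun t => ?_)
  unfold lder
  rw [Real.norm_eq_abs, abs_mul, abs_of_pos (gpdf_pos t)]
  have h1 : 0 < 2 / (1 + t ^ 2) ^ 2 := by positivity
  have h2 : 2 / (1 + t ^ 2) ^ 2 ≤ 2 := by
    rw [div_le_iff₀ (by positivity)]
    nlinarith [sq_nonneg t, sq_nonneg (t^2)]
  have : |1 - 2 / (1 + t ^ 2) ^ 2| ≤ 1 := abs_le.2 ⟨by linarith, by linarith⟩
  nlinarith [gpdf_pos t, abs_nonneg (1 - 2 / (1 + t ^ 2) ^ 2)]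

lemma tendsto_lfun : Tendsto lfun atTop (nhds 0) := by
  refine squeeze_zero_norm (fun t => ?_) tendsto_gpdf_atTop
  unfold lfun
  rw [Real.norm_eq_abs, abs_neg, abs_mul, abs_of_pos (gpdf_pos t)]
  have h2 : |t / (1 + t ^ 2)| ≤ 1 := by
    rw [abs_div, abs_of_pos (one_add_sq_pos t), div_le_one (one_add_sq_pos t)]
    nlinarith [abs_nonneg t, sq_abs t, sq_nonneg (|t| - 1)]
  nlinarith [gpdf_pos t, abs_nonneg (t / (1 + t ^ 2))]

lemma integral_lder (x : ℝ) : ∫ t in Set.Ioi x, lder t = x / (1 + x ^ 2) * gpdf x := by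
  have h := integral_Ioi_of_hasDerivAt_of_tendsto' (f := lfun) (f' := lder) (a := x) (m := 0)
    (fun t _ => hasDerivAt_lfun t) lder_integrable.integrableOn tendsto_lfun
  rw [h]; unfold lfun; ring

lemma tail_lower (x : ℝ) : x / (1 + x ^ 2) * gpdf x ≤ 1 - gcdf x := by
  rw [one_sub_gcdf, ← integral_lder x]
  refine setIntegral_mono_on lder_integrable.integrableOn gpdf_integrable.integrableOn
    measurableSet_Ioi fun t _ => ?_
  unfold lder
  have h1 : 0 < 2 / (1 + t ^ 2) ^ 2 := by positivity
  nlinarith [gpdf_pos t]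

lemma tendsto_id_mul_gpdf : Tendsto (fun x => x * gpdf x) atTop (nhds 0) := by
  have hb : Tendsto (fun x : ℝ => (1 / Real.sqrt (2 * Real.pi)) * (x ^ 1 * Real.exp (-x)))
      atTop (nhds 0) := by
    have := (tendsto_pow_mul_exp_neg_atTop_nhds_zero 1).const_mul (1 / Real.sqrt (2 * Real.pi))
    simpa using this
  refine squeeze_zero_norm' ?_ hb
  filter_upwards [eventually_ge_atTop (2:ℝ)] with x hx
  have hx0 : (0:ℝ) < x := by linarith
  have hexp : Real.exp (-x ^ 2 / 2) ≤ Real.exp (-x) := by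
    apply Real.exp_le_exp.2; nlinarith
  rw [Real.norm_eq_abs, abs_of_pos (mul_pos hx0 (gpdf_pos x))]
  have hc : (0:ℝ) < 1 / Real.sqrt (2 * Real.pi) := by positivity
  unfold gpdf
  rw [pow_one]
  calc x * (1 / Real.sqrt (2 * Real.pi) * Real.exp (-x ^ 2 / 2))
      = 1 / Real.sqrt (2 * Real.pi) * (x * Real.exp (-x ^ 2 / 2)) := by ring
    _ ≤ 1 / Real.sqrt (2 * Real.pi) * (x * Real.exp (-x)) :=
        mul_le_mul_of_nonneg_left (mul_le_mul_of_nonneg_left hexp hx0.le) hc.le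

lemma log_div_sq_tendsto : Tendsto (fun x : ℝ => Real.log x / x ^ 2) atTop (nhds 0) := by
  have h1 : Tendsto (fun x : ℝ => Real.log x / x) atTop (nhds 0) :=
    Real.isLittleO_log_id_atTop.tendsto_div_nhds_zero
  have h2 := h1.mul tendsto_inv_atTop_zero
  rw [mul_zero] at h2
  refine h2.congr' ?_
  filter_upwards [eventually_gt_atTop (0:ℝ)] with x hx
  rw [sq]
  field_simp

noncomputable def Fq (x : ℝ) : ℝ := -Real.log (1 - gcdf x)

lemma Fq_lower {x : ℝ} (hx : 1 ≤ x) :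
    x ^ 2 / 2 + Real.log x - Real.log (1 / Real.sqrt (2 * Real.pi)) ≤ Fq x := by
  have hx0 : (0:ℝ) < x := by linarith
  have h1 : 0 < 1 - gcdf x := by linarith [gcdf_lt_one x]
  have h2 : 1 - gcdf x ≤ gpdf x / x := tail_upper hx0
  have h3 : Real.log (1 - gcdf x) ≤ Real.log (gpdf x / x) := Real.log_le_log h1 h2
  have h4 : Real.log (gpdf x / x) =
      Real.log (1 / Real.sqrt (2 * Real.pi)) + (-x ^ 2 / 2) - Real.log x := by
    unfold gpdf
    rw [Real.log_div (by positivity) hx0.ne', Real.log_mul (by positivity) (Real.exp_pos _).ne',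
      Real.log_exp]
  unfold Fq; linarith

lemma Fq_upper {x : ℝ} (hx : 1 ≤ x) :
    Fq x ≤ x ^ 2 / 2 + Real.log 2 + Real.log x - Real.log (1 / Real.sqrt (2 * Real.pi)) := by
  have hx0 : (0:ℝ) < x := by linarith
  have h2 : x / (1 + x ^ 2) * gpdf x ≤ 1 - gcdf x := tail_lower x
  have hpos : (0:ℝ) < x / (1 + x ^ 2) * gpdf x := mul_pos (div_pos hx0 (by positivity)) (gpdf_pos x)
  have h3 : Real.log (x / (1 + x ^ 2) * gpdf x) ≤ Real.log (1 - gcdf x) :=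
    Real.log_le_log hpos h2
  have h4 : Real.log (x / (1 + x ^ 2) * gpdf x) =
      Real.log x - Real.log (1 + x ^ 2) + (Real.log (1 / Real.sqrt (2 * Real.pi)) + (-x ^ 2 / 2)) := by
    rw [Real.log_mul (div_pos hx0 (by positivity)).ne' (gpdf_pos x).ne',
      Real.log_div hx0.ne' (by positivity)]
    unfold gpdf
    rw [Real.log_mul (by positivity) (Real.exp_pos _).ne', Real.log_exp]
  have h5 : Real.log (1 + x ^ 2) ≤ Real.log 2 + 2 * Real.log x := by
    have : (1:ℝ) + x ^ 2 ≤ 2 * x ^ 2 := by nlinarith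
    calc Real.log (1 + x ^ 2) ≤ Real.log (2 * x ^ 2) := Real.log_le_log (by positivity) this
      _ = Real.log 2 + 2 * Real.log x := by
          rw [Real.log_mul (by norm_num) (by positivity), Real.log_pow]; push_cast; ring
  unfold Fq; linarith

lemma Fq_limit : Tendsto (fun x => 2 * Fq x / x ^ 2) atTop (nhds 1) := by
  set c := Real.log (1 / Real.sqrt (2 * Real.pi)) with hc
  have hlo : Tendsto (fun x : ℝ => 1 + (2 * Real.log x - 2 * c) / x ^ 2) atTop (nhds 1) := by
    have h1 : Tendsto (fun x : ℝ => (2 * Real.log x - 2 * c) / x ^ 2) atTop (nhds 0) := by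
      have ha := log_div_sq_tendsto.const_mul 2
      have hb := (tendsto_inv_atTop_zero : Tendsto (fun x : ℝ => x⁻¹) atTop (nhds 0)).const_mul (2 * c)
      rw [mul_zero] at ha hb
      have hb2 : Tendsto (fun x : ℝ => 2 * c / x ^ 2) atTop (nhds 0) := by
        have := hb.comp (tendsto_pow_atTop (n := 2) two_ne_zero)
        simpa [Function.comp_def, div_eq_mul_inv] using this
      have := ha.sub hb2
      rw [sub_zero] at this
      refine this.congr fun x => ?_
      ring
    have := (tendsto_const_nhds (x := (1:ℝ)) (f := atTop)).add h1
    simpa using this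
  have hhi : Tendsto (fun x : ℝ => 1 + (2 * Real.log 2 + 2 * Real.log x - 2 * c) / x ^ 2)
      atTop (nhds 1) := by
    have h1 : Tendsto (fun x : ℝ => (2 * Real.log 2 + 2 * Real.log x - 2 * c) / x ^ 2)
        atTop (nhds 0) := by
      have ha := log_div_sq_tendsto.const_mul 2
      have hb : Tendsto (fun x : ℝ => (2 * Real.log 2 - 2 * c) / x ^ 2) atTop (nhds 0) := by
        have := ((tendsto_inv_atTop_zero : Tendsto (fun x : ℝ => x⁻¹) atTop (nhds 0)).const_mul (2 * Real.log 2 - 2 * c)).comp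
          (tendsto_pow_atTop (n := 2) two_ne_zero)
        rw [mul_zero] at this
        simpa [Function.comp_def, div_eq_mul_inv] using this
      rw [mul_zero] at ha
      have := ha.add hb
      rw [add_zero] at this
      refine this.congr fun x => ?_
      ring
    have := (tendsto_const_nhds (x := (1:ℝ)) (f := atTop)).add h1
    simpa using this
  refine tendsto_of_tendsto_of_tendsto_of_le_of_le' hlo hhi ?_ ?_
  · filter_upwards [eventually_ge_atTop (1:ℝ)] with x hx
    have h := Fq_lower hx
    have hx2 : (0:ℝ) < x ^ 2 := by positivity
    have e : 1 + (2 * Real.log x - 2 * c) / x ^ 2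
        = (x ^ 2 + (2 * Real.log x - 2 * c)) / x ^ 2 := by
      rw [add_div, div_self hx2.ne']
    rw [e]
    exact (div_le_div_iff_of_pos_right hx2).2 (by linarith)
  · filter_upwards [eventually_ge_atTop (1:ℝ)] with x hx
    have h := Fq_upper hx
    have hx2 : (0:ℝ) < x ^ 2 := by positivity
    have e : 1 + (2 * Real.log 2 + 2 * Real.log x - 2 * c) / x ^ 2
        = (x ^ 2 + (2 * Real.log 2 + 2 * Real.log x - 2 * c)) / x ^ 2 := by
      rw [add_div, div_self hx2.ne']
    rw [e]
    exact (div_le_div_iff_of_pos_right hx2).2 (by linarith)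


/-- For the standard normal quantile `Q = Φ⁻¹` and the transformed function
`A(z) = Q(1 - e^{-z})`: the condition number `κ_Q(u) = |u Q'(u)/Q(u)|` blows up as
`u → 1⁻`, while `A(z)/√(2z) → 1` as `z → ∞`. -/
theorem normal_quantile_condition_number
    (Φ Q : ℝ → ℝ)
    (hΦ : Φ = fun x =>
      ∫ t in Set.Iic x, (1 / Real.sqrt (2 * Real.pi)) * Real.exp (-t ^ 2 / 2))
    (hQ : ∀ u ∈ Set.Ioo (0 : ℝ) 1, Φ (Q u) = u)
    (A : ℝ → ℝ) (hA : A = fun z => Q (1 - Real.exp (-z))) :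
    Filter.Tendsto (fun u : ℝ => |u * deriv Q u / Q u|)
        (nhdsWithin 1 (Set.Iio 1)) Filter.atTop ∧
      Filter.Tendsto (fun z : ℝ => A z / Real.sqrt (2 * z))
        Filter.atTop (nhds 1) := by
  subst hΦ hA
  have hQ' : ∀ u ∈ Set.Ioo (0 : ℝ) 1, gcdf (Q u) = u := hQ
  -- Q tends to infinity at 1⁻
  have Qtend : Tendsto Q (nhdsWithin 1 (Set.Iio 1)) atTop := by
    rw [tendsto_atTop]
    intro M
    filter_upwards [Ioo_mem_nhdsLT_of_mem (⟨gcdf_lt_one M, le_rfl⟩ :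
      (1:ℝ) ∈ Set.Ioc (gcdf M) 1)] with u hu
    have hu01 : u ∈ Set.Ioo (0:ℝ) 1 := ⟨lt_trans (gcdf_pos M) hu.1, hu.2⟩
    have : gcdf M < gcdf (Q u) := by rw [hQ' u hu01]; exact hu.1
    exact (gcdf_strictMono.lt_iff_lt.1 this).le
  -- Q is continuous on (0,1)
  have Qcont : ∀ u ∈ Set.Ioo (0:ℝ) 1, ContinuousAt Q u := by
    intro u hu
    rw [ContinuousAt]
    refine tendsto_order.2 ⟨fun b hb => ?_, fun b hb => ?_⟩
    · have hw : gcdf b < u := by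
        rw [← hQ' u hu]; exact gcdf_strictMono hb
      filter_upwards [Ioo_mem_nhds hw hu.2] with v hv
      have hv01 : v ∈ Set.Ioo (0:ℝ) 1 := ⟨lt_trans (gcdf_pos b) hv.1, hv.2⟩
      have : gcdf b < gcdf (Q v) := by rw [hQ' v hv01]; exact hv.1
      exact gcdf_strictMono.lt_iff_lt.1 this
    · have hw : u < gcdf b := by
        rw [← hQ' u hu]; exact gcdf_strictMono hb
      filter_upwards [Ioo_mem_nhds hu.1 hw] with v hv
      have hv01 : v ∈ Set.Ioo (0:ℝ) 1 := ⟨hv.1, lt_trans hv.2 (gcdf_lt_one b)⟩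
      have : gcdf (Q v) < gcdf b := by rw [hQ' v hv01]; exact hv.2
      exact gcdf_strictMono.lt_iff_lt.1 this
  -- derivative of Q
  have Qderiv : ∀ u ∈ Set.Ioo (0:ℝ) 1, HasDerivAt Q (gpdf (Q u))⁻¹ u := by
    intro u hu
    refine HasDerivAt.of_local_left_inverse (Qcont u hu) (gcdf_hasDeriv (Q u))
      (gpdf_pos _).ne' ?_
    filter_upwards [Ioo_mem_nhds hu.1 hu.2] with v hv
    exact hQ' v hv
  constructor
  · -- first claim
    have hg : Tendsto (fun u => Q u * gpdf (Q u)) (nhdsWithin 1 (Set.Iio 1)) (nhds 0) :=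
      tendsto_id_mul_gpdf.comp Qtend
    have hginv : Tendsto (fun u => (Q u * gpdf (Q u))⁻¹) (nhdsWithin 1 (Set.Iio 1)) atTop := by
      refine tendsto_inv_nhdsGT_zero.comp (tendsto_nhdsWithin_iff.2 ⟨hg, ?_⟩)
      filter_upwards [Qtend.eventually_gt_atTop 0] with u hu
      exact mul_pos hu (gpdf_pos _)
    have hnum : Tendsto (fun u : ℝ => u) (nhdsWithin 1 (Set.Iio 1)) (nhds 1) :=
      tendsto_id.mono_left nhdsWithin_le_nhds
    have hmain : Tendsto (fun u : ℝ => u * (Q u * gpdf (Q u))⁻¹)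
        (nhdsWithin 1 (Set.Iio 1)) atTop :=
      Filter.Tendsto.pos_mul_atTop one_pos hnum hginv
    refine hmain.congr' ?_
    filter_upwards [Ioo_mem_nhdsLT_of_mem (⟨one_half_lt_one, le_rfl⟩ :
        (1:ℝ) ∈ Set.Ioc (1/2) 1), Qtend.eventually_gt_atTop 0] with u hu hQu
    have hu01 : u ∈ Set.Ioo (0:ℝ) 1 := ⟨by linarith [hu.1], hu.2⟩
    rw [(Qderiv u hu01).deriv]
    have hpos : 0 < u * (gpdf (Q u))⁻¹ / Q u :=
      div_pos (mul_pos hu01.1 (inv_pos.2 (gpdf_pos _))) hQu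
    rw [abs_of_pos hpos, mul_inv, div_eq_mul_inv]
    ring
  · -- second claim
    have hsub : Tendsto (fun z : ℝ => 1 - Real.exp (-z)) atTop
        (nhdsWithin 1 (Set.Iio 1)) := by
      refine tendsto_nhdsWithin_iff.2 ⟨?_, Eventually.of_forall fun z => ?_⟩
      · have h0 : Tendsto (fun z : ℝ => Real.exp (-z)) atTop (nhds 0) :=
          Real.tendsto_exp_atBot.comp tendsto_neg_atTop_atBot
        have := (tendsto_const_nhds (x := (1:ℝ)) (f := atTop)).sub h0
        simpa using this
      · simp [Real.exp_pos]
    have hAtend : Tendsto (fun z => Q (1 - Real.exp (-z))) atTop atTop := Qtend.comp hsub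
    have hFz : ∀ᶠ z : ℝ in atTop, Fq (Q (1 - Real.exp (-z))) = z := by
      filter_upwards [eventually_gt_atTop (0:ℝ)] with z hz
      have hmem : 1 - Real.exp (-z) ∈ Set.Ioo (0:ℝ) 1 := by
        constructor
        · have : Real.exp (-z) < 1 := Real.exp_lt_one_iff.2 (by linarith)
          linarith
        · linarith [Real.exp_pos (-z)]
      unfold Fq
      rw [hQ' _ hmem]
      rw [show (1:ℝ) - (1 - Real.exp (-z)) = Real.exp (-z) by ring, Real.log_exp]
      ring
    have h1 : Tendsto (fun z : ℝ => 2 * z / (Q (1 - Real.exp (-z))) ^ 2) atTop (nhds 1) := by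
      refine (Fq_limit.comp hAtend).congr' ?_
      filter_upwards [hFz] with z hz
      simp only [Function.comp]
      rw [hz]
    have h2 : Tendsto (fun z : ℝ => Real.sqrt (2 * z / (Q (1 - Real.exp (-z))) ^ 2))
        atTop (nhds 1) := by
      have := (Real.continuous_sqrt.tendsto 1).comp h1
      rw [Real.sqrt_one] at this
      exact this
    have h3 := h2.inv₀ (by norm_num)
    rw [inv_one] at h3
    refine h3.congr' ?_
    filter_upwards [eventually_gt_atTop (0:ℝ), hAtend.eventually_gt_atTop 0] with z hz hAz
    rw [Real.sqrt_div' _ (by positivity : (0:ℝ) ≤ (Q (1 - Real.exp (-z))) ^ 2),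
      Real.sqrt_sq hAz.le, inv_div]
end
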